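/- Let G be a finite DAG with ReLU node semantics a_u = ReLU(∑_{v→u} k_{v,u} a_v) for non-leaf u, and suppose all non-leaf nodes with positive pre-activation on paths to root t are strictly positive (so gradients are well-defined via path sums over activated nodes). Let G' = G[V∖{w}] be the induced subgraph obtained by detaching a non-root node w, with activations a'_u recomputed by the same recursion (leaves keep their original activations). If along every path from any leaf to t the detachment only decreases pre-activations of nodes that remain strictly positive, then a'_t = a_t − attr_{w,t}, where attr_{w,t} = a_w · ∇_{a_t} a_w is computed in the original graph restricted to paths avoiding recomputation through w. -/

import Mathlib

/-! While no gate on a path to `t` changes state, `a` and `a'` both satisfy linear recursions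
there, so `d u := a u - a' u` obeys `d u = ∑ v, k v u * d v`, where the detached node `w`
contributes its full activation `a w` because its out-edges are cut. Splitting off the last edge
shows that `pathSum k w ·` satisfies the same recursion with value `1` at `w`, so induction along
the topological order gives `d t = a w * pathSum k w t`. -/

open Finset

noncomputable section
open scoped Classical

/-- Product of edge weights along a list of vertices. -/
def pathProd {n : ℕ} (k : Fin n → Fin n → ℝ) : List (Fin n) → ℝ
  | [] => 1
  | [_] => 1
  | i :: j :: rest => k i j * pathProd k (j :: rest)

/-- Vertex sets of potential (increasing) paths from `v` to `t`. -/
def pathFinsets {n : ℕ} (v t : Fin n) : Finset (Finset (Fin n)) :=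
  Finset.univ.powerset.filter (fun S => v ∈ S ∧ t ∈ S ∧ ∀ w ∈ S, v ≤ w ∧ w ≤ t)

/-- Sum over all directed paths from `v` to `t` of the product of edge weights. -/
def pathSum {n : ℕ} (k : Fin n → Fin n → ℝ) (v t : Fin n) : ℝ :=
  ∑ S ∈ pathFinsets v t, pathProd k (S.sort (· ≤ ·))

/-- There exists a genuine directed path (all edges present) from `v` to `t`. -/
def hasPath {n : ℕ} (k : Fin n → Fin n → ℝ) (v t : Fin n) : Prop :=
  ∃ S ∈ pathFinsets v t, (S.sort (· ≤ ·)).Chain' (fun i j => k i j ≠ 0)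

/-- Path sum restricted to paths all of whose intermediate nodes are activated. -/
def actPathSum {n : ℕ} (k : Fin n → Fin n → ℝ) (a : Fin n → ℝ) (v t : Fin n) : ℝ :=
  ∑ S ∈ (pathFinsets v t).filter (fun S => ∀ w ∈ S, w ≠ v → w ≠ t → 0 < a w),
    pathProd k (S.sort (· ≤ ·))

/-- Existence of an activated path (edges present, intermediate nodes activated). -/
def hasActPath {n : ℕ} (k : Fin n → Fin n → ℝ) (a : Fin n → ℝ) (v t : Fin n) : Prop :=
  ∃ S ∈ pathFinsets v t, (S.sort (· ≤ ·)).Chain' (fun i j => k i j ≠ 0) ∧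
    ∀ w ∈ S, w ≠ v → w ≠ t → 0 < a w

lemma mem_pathFinsets {n : ℕ} {v t : Fin n} {S : Finset (Fin n)} :
    S ∈ pathFinsets v t ↔ v ∈ S ∧ t ∈ S ∧ ∀ w ∈ S, v ≤ w ∧ w ≤ t := by
  simp [pathFinsets]

lemma pathSum_self {n : ℕ} (k : Fin n → Fin n → ℝ) (w : Fin n) : pathSum k w w = 1 := by
  have hself : pathFinsets w w = {{w}} := by
    ext S
    simp only [mem_pathFinsets, Finset.mem_singleton, Finset.eq_singleton_iff_unique_mem]
    exact ⟨fun ⟨hw, _, hb⟩ => ⟨hw, fun x hx => le_antisymm (hb x hx).2 (hb x hx).1⟩,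
      fun ⟨hw, hb⟩ => ⟨hw, hw, fun x hx => by simp [hb x hx]⟩⟩
  rw [pathSum, hself, Finset.sum_singleton, Finset.sort_singleton, pathProd]

lemma pathProd_append_pair {n : ℕ} (k : Fin n → Fin n → ℝ) (l : List (Fin n)) (v u : Fin n) :
    pathProd k (l ++ [v, u]) = pathProd k (l ++ [v]) * k v u := by
  induction l with
  | nil => simp [pathProd]
  | cons x l ih =>
    cases l with
    | nil => simp [pathProd]
    | cons y l => simp only [List.cons_append, pathProd] at ih ⊢; rw [ih, mul_assoc]

lemma sort_insert_of_forall_lt {n : ℕ} {S : Finset (Fin n)} {u : Fin n}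
    (h : ∀ x ∈ S, x < u) :
    (insert u S).sort (· ≤ ·) = S.sort (· ≤ ·) ++ [u] := by
  have hu : u ∉ S := fun hmem => lt_irrefl u (h u hmem)
  have hperm : ((insert u S).sort (· ≤ ·)).Perm (S.sort (· ≤ ·) ++ [u]) := by
    refine List.Perm.trans ?_ (List.perm_append_singleton u _).symm
    rw [← Multiset.coe_eq_coe, Finset.sort_eq, Finset.insert_val_of_notMem hu,
      ← Multiset.cons_coe, Finset.sort_eq]
  have hsorted : (S.sort (· ≤ ·) ++ [u]).Pairwise (· ≤ ·) := by
    refine List.pairwise_append.2 ⟨Finset.pairwise_sort _ _, by simp, ?_⟩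
    intro x hx y hy
    rw [List.mem_singleton.1 hy]
    exact (h x ((Finset.mem_sort _).1 hx)).le
  exact hperm.eq_of_pairwise' (Finset.pairwise_sort _ _) hsorted

lemma pathProd_sort_insert {n : ℕ} (k : Fin n → Fin n → ℝ) {w v u : Fin n}
    {S : Finset (Fin n)} (hS : S ∈ pathFinsets w v) (hvu : v < u) :
    pathProd k ((insert u S).sort (· ≤ ·)) = pathProd k (S.sort (· ≤ ·)) * k v u := by
  obtain ⟨-, hv, hb⟩ := mem_pathFinsets.1 hS
  have hSv : S = insert v (S.erase v) := (Finset.insert_erase hv).symm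
  have herase : ∀ x ∈ S.erase v, x < v := fun x hx =>
    lt_of_le_of_ne (hb x (Finset.mem_of_mem_erase hx)).2 (Finset.ne_of_mem_erase hx)
  have hsortS : S.sort (· ≤ ·) = (S.erase v).sort (· ≤ ·) ++ [v] := by
    rw [hSv, sort_insert_of_forall_lt herase, Finset.erase_insert (Finset.notMem_erase v S)]
  rw [sort_insert_of_forall_lt fun x hx => (hb x hx).2.trans_lt hvu, hsortS,
    List.append_assoc, List.singleton_append, pathProd_append_pair]

lemma insert_mem_pathFinsets {n : ℕ} {w v u : Fin n} {S : Finset (Fin n)}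
    (hS : S ∈ pathFinsets w v) (hvu : v < u) : insert u S ∈ pathFinsets w u := by
  obtain ⟨hw, -, hb⟩ := mem_pathFinsets.1 hS
  refine mem_pathFinsets.2 ⟨Finset.mem_insert_of_mem hw, Finset.mem_insert_self _ _, ?_⟩
  intro x hx
  rcases Finset.mem_insert.1 hx with rfl | hx
  · exact ⟨((hb w hw).2.trans_lt hvu).le, le_rfl⟩
  · exact ⟨(hb x hx).1, ((hb x hx).2.trans_lt hvu).le⟩

lemma erase_insert_of_mem_pathFinsets {n : ℕ} {w v u : Fin n} {S : Finset (Fin n)}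
    (hS : S ∈ pathFinsets w v) (hvu : v < u) : (insert u S).erase u = S :=
  Finset.erase_insert fun hu => (hvu.trans_le ((mem_pathFinsets.1 hS).2.2 u hu).2).false

lemma pathFinsets_eq_biUnion {n : ℕ} {w u : Fin n} (hu : u ≠ w) :
    pathFinsets w u =
      (Finset.univ.filter (· < u)).biUnion fun v => (pathFinsets w v).image (insert u) := by
  ext S
  simp only [Finset.mem_biUnion, Finset.mem_filter, Finset.mem_univ, true_and,
    Finset.mem_image]
  constructor
  · intro hS
    obtain ⟨hwS, huS, hb⟩ := mem_pathFinsets.1 hS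
    have hw : w ∈ S.erase u := Finset.mem_erase.2 ⟨hu.symm, hwS⟩
    have hne : (S.erase u).Nonempty := ⟨w, hw⟩
    -- the last edge of the path enters `u` from the largest remaining vertex
    have hv := Finset.max'_mem _ hne
    refine ⟨_, lt_of_le_of_ne (hb _ (Finset.mem_of_mem_erase hv)).2 (Finset.ne_of_mem_erase hv),
      S.erase u, mem_pathFinsets.2 ⟨hw, hv, fun x hx => ?_⟩, Finset.insert_erase huS⟩
    exact ⟨(hb x (Finset.mem_of_mem_erase hx)).1, Finset.le_max' _ _ hx⟩
  · rintro ⟨v, hvu, S, hS, rfl⟩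
    exact insert_mem_pathFinsets hS hvu

lemma pathSum_eq_sum_mul {n : ℕ} (k : Fin n → Fin n → ℝ) (htopo : ∀ i j, k i j ≠ 0 → i < j)
    {w u : Fin n} (hu : u ≠ w) :
    pathSum k w u = ∑ v, pathSum k w v * k v u := by
  have hvanish : ∀ v ∈ Finset.univ, pathSum k w v * k v u ≠ 0 → v < u := fun v _ h =>
    htopo v u (right_ne_zero_of_mul h)
  rw [← Finset.sum_filter_of_ne hvanish, pathSum, pathFinsets_eq_biUnion hu, Finset.sum_biUnion]
  · refine Finset.sum_congr rfl fun v hv => ?_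
    have hvu := (Finset.mem_filter.1 hv).2
    rw [Finset.sum_image, pathSum, Finset.sum_mul]
    · exact Finset.sum_congr rfl fun S hS => pathProd_sort_insert k hS hvu
    · intro S₁ h₁ S₂ h₂ heq
      rw [← erase_insert_of_mem_pathFinsets h₁ hvu, ← erase_insert_of_mem_pathFinsets h₂ hvu,
        heq]
  · intro v₁ h₁ v₂ h₂ hne
    simp only [Function.onFun, Finset.disjoint_left, Finset.mem_image]
    rintro _ ⟨S, hS₁, rfl⟩ ⟨S', hS₂, heq⟩
    have hlt₁ := (Finset.mem_filter.1 h₁).2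
    have hlt₂ := (Finset.mem_filter.1 h₂).2
    rw [← erase_insert_of_mem_pathFinsets hS₂ hlt₂, heq,
      erase_insert_of_mem_pathFinsets hS₁ hlt₁] at hS₂
    obtain ⟨-, hv₁, hb₁⟩ := mem_pathFinsets.1 hS₁
    obtain ⟨-, hv₂, hb₂⟩ := mem_pathFinsets.1 hS₂
    exact hne (le_antisymm (hb₂ v₁ hv₁).2 (hb₁ v₂ hv₂).2)

lemma hasPath_self {n : ℕ} (k : Fin n → Fin n → ℝ) (t : Fin n) : hasPath k t t :=
  ⟨{t}, mem_pathFinsets.2 ⟨by simp, by simp, by simp⟩, by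
    rw [Finset.sort_singleton]; exact List.isChain_singleton _⟩

lemma hasPath_of_edge {n : ℕ} {k : Fin n → Fin n → ℝ} (htopo : ∀ i j, k i j ≠ 0 → i < j)
    {v u t : Fin n} (hk : k v u ≠ 0) (hp : hasPath k u t) : hasPath k v t := by
  obtain ⟨S, hS, hchain⟩ := hp
  obtain ⟨huS, htS, hb⟩ := mem_pathFinsets.1 hS
  have hvu : v < u := htopo v u hk
  have hvle : ∀ x ∈ S, v ≤ x := fun x hx => hvu.le.trans (hb x hx).1
  have hvS : v ∉ S := fun h => (hvu.trans_le (hb v h).1).false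
  refine ⟨insert v S, mem_pathFinsets.2 ⟨Finset.mem_insert_self _ _,
    Finset.mem_insert_of_mem htS, ?_⟩, ?_⟩
  · intro x hx
    rcases Finset.mem_insert.1 hx with rfl | hx
    · exact ⟨le_rfl, hvle t htS⟩
    · exact ⟨hvle x hx, (hb x hx).2⟩
  · have hsortS : S.sort (· ≤ ·) = u :: (S.erase u).sort (· ≤ ·) := by
      conv_lhs => rw [← Finset.insert_erase huS]
      exact Finset.sort_insert _ (fun x hx => (hb x (Finset.mem_of_mem_erase hx)).1)
        (Finset.notMem_erase u S)
    rw [Finset.sort_insert _ hvle hvS, hsortS, List.Chain', List.isChain_cons_cons]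
    rw [hsortS] at hchain
    exact ⟨hk, hchain⟩

theorem sub_eq_mul_pathSum_of_linear {n : ℕ} {k : Fin n → Fin n → ℝ} {a a' : Fin n → ℝ}
    {t w : Fin n}
    (htopo : ∀ i j, k i j ≠ 0 → i < j)
    (hrec : ∀ u, (∃ v, k v u ≠ 0) → a u = max (∑ v, k v u * a v) 0)
    (hpos : ∀ u, (∃ v, k v u ≠ 0) → hasPath k u t → 0 < ∑ v, k v u * a v)
    (hrec' : ∀ u, u ≠ w → (∃ v, k v u ≠ 0) →
      a' u = max (∑ v, if v = w then 0 else k v u * a' v) 0)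
    (hleaf' : ∀ u, (∀ v, k v u = 0) → a' u = a u)
    (hpos' : ∀ u, u ≠ w → (∃ v, k v u ≠ 0) → hasPath k u t →
      0 < ∑ v, if v = w then 0 else k v u * a' v)
    (u : Fin n) (huw : u ≠ w) (hut : hasPath k u t) :
    a u - a' u = a w * pathSum k w u := by
  induction u using WellFoundedLT.induction with
  | ind u ih =>
  by_cases hleaf : ∀ v, k v u = 0
  · simp [hleaf' u hleaf, pathSum_eq_sum_mul k htopo huw, hleaf]
  have hin : ∃ v, k v u ≠ 0 := by simpa using hleaf
  have ha : a u = ∑ v, k v u * a v :=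
    (hrec u hin).trans (max_eq_left (hpos u hin hut).le)
  have ha' : a' u = ∑ v, if v = w then 0 else k v u * a' v :=
    (hrec' u huw hin).trans (max_eq_left (hpos' u huw hin hut).le)
  rw [ha, ha', ← Finset.sum_sub_distrib, pathSum_eq_sum_mul k htopo huw, Finset.mul_sum]
  refine Finset.sum_congr rfl fun v _ => ?_
  by_cases hk : k v u = 0
  · simp [hk]
  by_cases hvw : v = w
  · rw [if_pos hvw, hvw, pathSum_self]
    ring
  · rw [if_neg hvw, ← mul_sub, ih v (htopo v u hk) hvw (hasPath_of_edge htopo hk hut)]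
    ring

/-- the causal effect of detaching a node w from a ReLU computation
graph, when no ReLU gate changes state (pre-activations on paths to the root only
decrease but stay strictly positive), is exactly the attribution score of w:
a'_t = a_t − a_w · ∇_{a_t} a_w. -/
theorem detach_effect_equals_attribution {n : ℕ} (k : Fin n → Fin n → ℝ)
    (a a' : Fin n → ℝ) (t w : Fin n)
    (htopo : ∀ i j, k i j ≠ 0 → i < j)
    (hwt : w ≠ t)
    (hrec : ∀ u, (∃ v, k v u ≠ 0) → a u = max (∑ v, k v u * a v) 0)
    (hpos : ∀ u, (∃ v, k v u ≠ 0) → hasPath k u t → 0 < ∑ v, k v u * a v)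
    (hrec' : ∀ u, u ≠ w → (∃ v, k v u ≠ 0) →
      a' u = max (∑ v, if v = w then 0 else k v u * a' v) 0)
    (hleaf' : ∀ u, (∀ v, k v u = 0) → a' u = a u)
    (hmono : ∀ u, u ≠ w → (∃ v, k v u ≠ 0) → hasPath k u t →
      (∑ v, if v = w then 0 else k v u * a' v) ≤ (∑ v, k v u * a v) ∧
      0 < ∑ v, if v = w then 0 else k v u * a' v) :
    a' t = a t - a w * pathSum k w t := by
  have hpos' := fun u huw hin hut => (hmono u huw hin hut).2
  have := sub_eq_mul_pathSum_of_linear htopo hrec hpos hrec' hleaf' hpos' t hwt.symm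
    (hasPath_self k t)
  linarith
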